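/- Suppose the bosonization B(G,g,χ) of a quantum linear space has rank θ and acts linearly and inner faithfully on A = k_μ[u,v] or A = A_1^μ(k), where ord(μ) and all m_i are at least 3. Then θ ≤ 2; and if θ = 2, then there exists a primitive m-th root of unity ω such that χ_1(g_1) = χ_2(g_1) = ω and χ_1(g_2) = χ_2(g_2) = ω^{-1}. -/

import Mathlib

/-- The defining relation of the algebra `k⟨u,v⟩/(uv - μvu - c)`: for `c = 0` this is the
quantum plane `k_μ[u,v]`, and for `c = 1` it is the quantum Weyl algebra `A_1^μ(k)`. -/
inductive QPWRel (k : Type) [Field k] (μ c : k) :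
    FreeAlgebra k (Fin 2) → FreeAlgebra k (Fin 2) → Prop
  | rel : QPWRel k μ c (FreeAlgebra.ι k 0 * FreeAlgebra.ι k 1)
      (μ • (FreeAlgebra.ι k 1 * FreeAlgebra.ι k 0) + algebraMap k (FreeAlgebra k (Fin 2)) c)

/-- The algebra `k⟨u,v⟩/(uv - μvu - c)`. -/
abbrev QPW (k : Type) [Field k] (μ c : k) : Type := RingQuot (QPWRel k μ c)

/-- The generator `u`. -/
noncomputable def QPW.u (k : Type) [Field k] (μ c : k) : QPW k μ c :=
  RingQuot.mkAlgHom k (QPWRel k μ c) (FreeAlgebra.ι k 0)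

/-- The generator `v`. -/
noncomputable def QPW.v (k : Type) [Field k] (μ c : k) : QPW k μ c :=
  RingQuot.mkAlgHom k (QPWRel k μ c) (FreeAlgebra.ι k 1)
/-- Action data for the bosonization `B(G, ĝ, χ̂) = R(g_1,…,g_θ,χ_1,…,χ_θ) # kG` of a
quantum linear space over a finite abelian group `G` on a `k`-algebra `A`: the group `G`
acts by `k`-algebra automorphisms, each skew-primitive generator `x_i` acts as a
`(g_i,1)`-skew derivation, subject to the defining relations `h·x_i = χ_i(h) x_i·h`,
`x_i x_j = χ_j(g_i) x_j x_i` (`i ≠ j`) and `x_i^{m_i} = 0` with `m_i = ord(χ_i(g_i))`.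
Giving such data is the same as making `A` a left `B(G, ĝ, χ̂)`-module algebra. -/
structure BosAction (k : Type) [Field k] (G : Type) [CommGroup G] {θ : ℕ}
    (gs : Fin θ → G) (χs : Fin θ → (G →* k))
    (A : Type) [Ring A] [Algebra k A] where
  ρ : G →* (A ≃ₐ[k] A)
  x : Fin θ → Module.End k A
  comm : ∀ (i : Fin θ) (h : G) (a : A), ρ h (x i a) = χs i h • x i (ρ h a)
  skew : ∀ (i : Fin θ) (a b : A), x i (a * b) = ρ (gs i) a * x i b + x i a * b
  xx : ∀ (i j : Fin θ), i ≠ j → ∀ a : A, x i (x j a) = χs j (gs i) • x j (x i a)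
  x_pow : ∀ i : Fin θ, (x i ^ orderOf (χs i (gs i)) : Module.End k A) = 0

/-- Inner faithfulness of a `B(G, ĝ, χ̂)`-action: no nonzero Hopf ideal of the
bosonization annihilates `A`; concretely, each `x_i` acts by a nonzero operator and the
group `G` acts faithfully on `A`. -/
def BosAction.InnerFaithful {k : Type} [Field k] {G : Type} [CommGroup G] {θ : ℕ}
    {gs : Fin θ → G} {χs : Fin θ → (G →* k)} {A : Type} [Ring A] [Algebra k A]
    (T : BosAction k G gs χs A) : Prop :=
  (∀ i, T.x i ≠ 0) ∧ Function.Injective T.ρ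

/-!
Since `uv = μvu + c`, an automorphism preserving `span {u, v}` must be diagonal in the basis
`u, v` (comparing the coefficients of `u²`, `v²` and `vu` uses `μ ≠ 1` and `μ² ≠ 1`). The group
therefore acts by characters `α, β` on `u, v`, and as `χᵢ(gᵢ) ≠ 1`, each `xᵢ` swaps the lines `ku`
and `kv`. Nilpotency of `xᵢ` and `xᵢ ≠ 0` leave two kinds of `xᵢ`: those with `xᵢ v ∈ k^× u`,
`xᵢ u = 0`, for which `χᵢ = α / β`, and those with `xᵢ u ∈ k^× v`, `xᵢ v = 0`, for which
`χᵢ = β / α`. The relation `xᵢ xⱼ = χⱼ(gᵢ) xⱼ xᵢ` applied to `u` or `v` rules out two kinds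
in one action, so all `χᵢ` coincide. Together with `χᵢ(gⱼ) χⱼ(gᵢ) = 1` this forces the stated
form of `χᵢ(gⱼ)`, and for three indices it would force `χ(g₁)² = 1` for the common character `χ`.
-/

theorem Module.End.eq_zero_of_skew_derivation {k A F : Type*} [CommRing k] [Ring A]
    [Algebra k A] [FunLike F A A] [OneHomClass F A A] {s : Set A}
    (hs : Algebra.adjoin k s = ⊤) (σ : F) (X : Module.End k A)
    (hX : ∀ a b, X (a * b) = σ a * X b + X a * b) (hXs : ∀ a ∈ s, X a = 0) : X = 0 := by
  have hX1 : X 1 = 0 := by simpa using hX 1 1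
  refine LinearMap.ext fun a ↦ (?_ : X a = 0)
  have ha : a ∈ Algebra.adjoin k s := hs ▸ Algebra.mem_top
  induction ha using Algebra.adjoin_induction with
  | mem a ha => exact hXs a ha
  | algebraMap r => rw [Algebra.algebraMap_eq_smul_one, map_smul, hX1, smul_zero]
  | add a b _ _ ha hb => rw [map_add, ha, hb, add_zero]
  | mul a b _ _ ha hb => rw [hX, ha, hb, mul_zero, zero_mul, add_zero]

theorem Module.End.mul_eq_zero_of_swap_of_isNilpotent {K M : Type*} [Field K] [AddCommGroup M]
    [Module K M] {X : Module.End K M} (hX : IsNilpotent X) {u v : M} (hu0 : u ≠ 0) {s t : K}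
    (hu : X u = s • v) (hv : X v = t • u) : s * t = 0 := by
  have hsq : (X ^ 2) u = (s * t) • u := by
    rw [pow_two, Module.End.mul_apply, hu, map_smul, hv, smul_smul]
  have hpow (n : ℕ) : ((X ^ 2) ^ n) u = (s * t) ^ n • u := by
    induction n with
    | zero => simp
    | succ n ih => rw [pow_succ', Module.End.mul_apply, ih, map_smul, hsq, smul_smul, pow_succ]
  obtain ⟨n, hn⟩ := hX
  have hXn := hpow n
  rw [← pow_mul, mul_comm, pow_mul, hn, zero_pow two_ne_zero] at hXn
  exact IsNilpotent.eq_zero ⟨n, (smul_eq_zero.mp hXn.symm).resolve_right hu0⟩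

namespace BosAction

variable {k : Type} [Field k] {G : Type} [CommGroup G] {θ : ℕ} {gs : Fin θ → G}
  {χs : Fin θ → (G →* k)} {A : Type} [Ring A] [Algebra k A] (T : BosAction k G gs χs A)

theorem ρ_x_apply_of_ρ_eq_smul {i : Fin θ} {h : G} {a : A} {α : k} (ha : T.ρ h a = α • a) :
    T.ρ h (T.x i a) = (χs i h * α) • T.x i a := by
  rw [T.comm, ha, map_smul, smul_smul]

theorem eq_chi_mul_of_x_apply_eq_smul {i : Fin θ} {h : G} {a b : A} {α β s : k}
    (ha : T.ρ h a = α • a) (hb : T.ρ h b = β • b) (hb0 : b ≠ 0) (hs : s ≠ 0)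
    (hx : T.x i a = s • b) : β = χs i h * α := by
  have hρ := T.ρ_x_apply_of_ρ_eq_smul (i := i) ha
  rw [hx, map_smul, hb, smul_smul, smul_smul] at hρ
  exact mul_left_cancel₀ hs ((smul_left_injective k hb0 hρ).trans (mul_comm _ _))

theorem chi_apply_eq_of_x_apply_eq_smul {i j : Fin θ} {h : G} {a b : A} {α β sᵢ sⱼ : k}
    (ha : T.ρ h a = α • a) (hb : T.ρ h b = β • b) (hα : α ≠ 0) (hb0 : b ≠ 0)
    (hsᵢ : sᵢ ≠ 0) (hsⱼ : sⱼ ≠ 0) (hxᵢ : T.x i a = sᵢ • b) (hxⱼ : T.x j a = sⱼ • b) :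
    χs i h = χs j h :=
  mul_right_cancel₀ hα <| (T.eq_chi_mul_of_x_apply_eq_smul ha hb hb0 hsᵢ hxᵢ).symm.trans
    (T.eq_chi_mul_of_x_apply_eq_smul ha hb hb0 hsⱼ hxⱼ)

theorem exists_x_apply_eq_smul {i : Fin θ} {h : G} {a b : A} {α β : k}
    (hab : LinearIndependent k ![a, b]) (ha : T.ρ h a = α • a) (hb : T.ρ h b = β • b)
    (hα : α ≠ 0) (hχ : χs i h ≠ 1) (hx : T.x i a ∈ Submodule.span k {a, b}) :
    ∃ s : k, T.x i a = s • b := by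
  obtain ⟨p, q, hpq⟩ := Submodule.mem_span_pair.mp hx
  have hρ := T.ρ_x_apply_of_ρ_eq_smul (i := i) ha
  rw [← hpq, map_add, map_smul, map_smul, ha, hb, smul_add, smul_smul, smul_smul, smul_smul,
    smul_smul] at hρ
  have hp : p * (α * (1 - χs i h)) = 0 := by linear_combination (hab.eq_of_pair hρ).1
  have hp : p = 0 := by simpa [hα, sub_eq_zero, Ne.symm hχ] using hp
  exact ⟨q, by rw [← hpq, hp, zero_smul, zero_add]⟩

theorem eq_zero_of_x_apply_eq_smul_of_ne {i j : Fin θ} (hji : j ≠ i) {a b : A} (ha0 : a ≠ 0)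
    {s s' t : k} (hs : s ≠ 0) (hia : T.x i a = s • b) (hib : T.x i b = 0) (hja : T.x j a = s' • b)
    (hjb : T.x j b = t • a) : t = 0 := by
  have hxx := T.xx j i hji a
  rw [hia, hja, map_smul, map_smul, hjb, hib, smul_zero, smul_zero, smul_smul,
    smul_eq_zero] at hxx
  exact (mul_eq_zero.mp (hxx.resolve_right ha0)).resolve_left hs

variable {u v : A}

theorem exists_x_apply_antidiagonal (huv : LinearIndependent k ![u, v])
    (hgen : Algebra.adjoin k {u, v} = ⊤) {i : Fin θ} {α β : k} (hα : α ≠ 0) (hβ : β ≠ 0)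
    (hu : T.ρ (gs i) u = α • u) (hv : T.ρ (gs i) v = β • v)
    (hx : ∀ a ∈ Submodule.span k {u, v}, T.x i a ∈ Submodule.span k {u, v})
    (hχ : χs i (gs i) ≠ 1) (hne : T.x i ≠ 0) :
    ∃ s t : k, T.x i u = s • v ∧ T.x i v = t • u ∧ s * t = 0 ∧ (s ≠ 0 ∨ t ≠ 0) := by
  have hu_mem : u ∈ Submodule.span k {u, v} := Submodule.subset_span (by simp)
  have hv_mem : v ∈ Submodule.span k {u, v} := Submodule.subset_span (by simp)
  obtain ⟨s, hs⟩ := T.exists_x_apply_eq_smul huv hu hv hα hχ (hx u hu_mem)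
  obtain ⟨t, ht⟩ := T.exists_x_apply_eq_smul (LinearIndependent.pair_symm_iff.mp huv) hv hu hβ
    hχ (by rw [Set.pair_comm]; exact hx v hv_mem)
  refine ⟨s, t, hs, ht, ?_, ?_⟩
  · exact Module.End.mul_eq_zero_of_swap_of_isNilpotent ⟨_, T.x_pow i⟩ (huv.ne_zero 0) hs ht
  · by_contra! hst
    refine hne (Module.End.eq_zero_of_skew_derivation hgen (T.ρ (gs i)) (T.x i) (T.skew i) ?_)
    rintro a (rfl | rfl) <;> simp [hs, ht, hst]

theorem chi_eq_of_adjoin_eq_top (huv : LinearIndependent k ![u, v])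
    (hgen : Algebra.adjoin k {u, v} = ⊤)
    (hρ : ∀ h, ∃ α β : k, α ≠ 0 ∧ β ≠ 0 ∧ T.ρ h u = α • u ∧ T.ρ h v = β • v)
    (hx : ∀ i, ∀ a ∈ Submodule.span k {u, v}, T.x i a ∈ Submodule.span k {u, v})
    (hχ : ∀ i, χs i (gs i) ≠ 1) (hne : ∀ i, T.x i ≠ 0) (i j : Fin θ) : χs i = χs j := by
  choose α β hα hβ hu hv using hρ
  choose s t hs ht hst hst₀ using fun i ↦
    T.exists_x_apply_antidiagonal huv hgen (hα _) (hβ _) (hu _) (hv _) (hx i) (hχ i) (hne i)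
  rcases eq_or_ne j i with rfl | hji
  · rfl
  have hu0 : u ≠ 0 := huv.ne_zero 0
  have hv0 : v ≠ 0 := huv.ne_zero 1
  ext h
  rcases mul_eq_zero.mp (hst i) with hsᵢ | htᵢ
  · have htᵢ : t i ≠ 0 := hst₀ i |>.resolve_left (not_not.mpr hsᵢ)
    have hsⱼ : s j = 0 := T.eq_zero_of_x_apply_eq_smul_of_ne hji hv0 htᵢ (ht i)
      (by rw [hs i, hsᵢ, zero_smul]) (ht j) (hs j)
    have htⱼ : t j ≠ 0 := hst₀ j |>.resolve_left (not_not.mpr hsⱼ)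
    exact T.chi_apply_eq_of_x_apply_eq_smul (hv h) (hu h) (hβ h) hu0 htᵢ htⱼ (ht i) (ht j)
  · have hsᵢ : s i ≠ 0 := hst₀ i |>.resolve_right (not_not.mpr htᵢ)
    have htⱼ : t j = 0 := T.eq_zero_of_x_apply_eq_smul_of_ne hji hu0 hsᵢ (hs i)
      (by rw [ht i, htᵢ, zero_smul]) (hs j) (ht j)
    have hsⱼ : s j ≠ 0 := hst₀ j |>.resolve_right (not_not.mpr htⱼ)
    exact T.chi_apply_eq_of_x_apply_eq_smul (hu h) (hv h) (hα h) hv0 hsᵢ hsⱼ (hs i) (hs j)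

end BosAction

namespace QPW

variable {k : Type} [Field k] (μ c : k)

theorem u_mul_v : u k μ c * v k μ c = μ • (v k μ c * u k μ c) + algebraMap k _ c := by
  rw [u, v, ← map_mul, RingQuot.mkAlgHom_rel k QPWRel.rel, map_add, map_smul, map_mul,
    AlgHom.commutes]

theorem adjoin_u_v : Algebra.adjoin k {u k μ c, v k μ c} = ⊤ := by
  have hgen : {u k μ c, v k μ c}
      = RingQuot.mkAlgHom k (QPWRel k μ c) '' Set.range (FreeAlgebra.ι k) := by
    rw [← Set.range_comp]
    ext
    simp [Fin.exists_fin_two, u, v, eq_comm]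
  rw [hgen, Algebra.adjoin_image, FreeAlgebra.adjoin_range_ι, Algebra.map_top,
    AlgHom.range_eq_top]
  exact RingQuot.mkAlgHom_surjective k _

noncomputable def mono (a b : ℕ) : (ℕ × ℕ) →₀ k := Finsupp.single (a, b) 1

/-- Left multiplication by `u` and `v` on the basis `mono a b = vᵃ uᵇ`, read off from
`u vᵃ = μᵃ vᵃ u + c (1 + μ + ⋯ + μᵃ⁻¹) vᵃ⁻¹` (for `a = 0` the second term vanishes, so the
truncated `a - 1` is harmless). -/
noncomputable def lmulU : Module.End k ((ℕ × ℕ) →₀ k) :=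
  Finsupp.linearCombination k fun p ↦
    μ ^ p.1 • mono p.1 (p.2 + 1) + (c * ∑ i ∈ Finset.range p.1, μ ^ i) • mono (p.1 - 1) p.2

noncomputable def lmulV : Module.End k ((ℕ × ℕ) →₀ k) :=
  Finsupp.linearCombination k fun p ↦ mono (p.1 + 1) p.2

theorem lmulU_mono (a b : ℕ) :
    lmulU μ c (mono a b)
      = μ ^ a • mono a (b + 1) + (c * ∑ i ∈ Finset.range a, μ ^ i) • mono (a - 1) b := by
  rw [lmulU, mono, Finsupp.linearCombination_single, one_smul]

theorem lmulV_mono (a b : ℕ) : lmulV (mono a b) = (mono (a + 1) b : (ℕ × ℕ) →₀ k) := by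
  rw [lmulV, mono, Finsupp.linearCombination_single, one_smul]

theorem lmulU_mul_lmulV : lmulU μ c * lmulV = μ • (lmulV * lmulU μ c) + algebraMap k _ c := by
  refine Finsupp.lhom_ext' fun ⟨a, b⟩ ↦ LinearMap.ext_ring ?_
  change lmulU μ c (lmulV (mono a b)) = μ • lmulV (lmulU μ c (mono a b)) + c • mono a b
  rw [lmulV_mono, lmulU_mono, lmulU_mono, map_add, map_smul, map_smul, lmulV_mono,
    Nat.add_sub_cancel]
  cases a with
  | zero => simp
  | succ n =>
    rw [Nat.add_sub_cancel, lmulV_mono, geom_sum_succ (n := n + 1)]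
    module

noncomputable def toEnd : QPW k μ c →ₐ[k] Module.End k ((ℕ × ℕ) →₀ k) :=
  RingQuot.liftAlgHom k ⟨FreeAlgebra.lift k ![lmulU μ c, lmulV], by
    rintro _ _ ⟨⟩
    simpa using lmulU_mul_lmulV μ c⟩

theorem toEnd_u : toEnd μ c (u k μ c) = lmulU μ c := by
  simp [toEnd, u]

theorem toEnd_v : toEnd μ c (v k μ c) = lmulV := by
  simp [toEnd, v]

theorem linearIndependent_u_v : LinearIndependent k ![u k μ c, v k μ c] := by
  refine LinearIndependent.pair_iff.mpr fun s t hst ↦ ?_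
  have h := congrArg (fun w ↦ toEnd μ c w (mono 0 0)) hst
  simp only [map_add, map_smul, map_zero, toEnd_u, toEnd_v, LinearMap.add_apply,
    LinearMap.smul_apply, LinearMap.zero_apply, lmulU_mono, lmulV_mono] at h
  exact ⟨by simpa [mono] using congrArg (· (0, 1)) h, by simpa [mono] using congrArg (· (1, 0)) h⟩

theorem coeffs_mul_eq_zero_of_rel (hμ₁ : μ ≠ 1) (hμ₂ : μ ^ 2 ≠ 1) {a b e d : k}
    (h : (a • u k μ c + b • v k μ c) * (e • u k μ c + d • v k μ c)
      = μ • ((e • u k μ c + d • v k μ c) * (a • u k μ c + b • v k μ c)) + algebraMap k _ c) :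
    a * e = 0 ∧ b * d = 0 ∧ b * e = 0 := by
  have h := congrArg (fun w ↦ toEnd μ c w (mono 0 0)) h
  simp only [map_add, map_smul, map_mul, toEnd_u, toEnd_v, AlgHom.commutes, LinearMap.add_apply,
    LinearMap.smul_apply, Module.End.mul_apply, Module.algebraMap_end_apply, lmulU_mono,
    lmulV_mono] at h
  have h02 : e * a = μ * (a * e) := by simpa [mono] using congrArg (· (0, 2)) h
  have h20 : d * b = μ * (b * d) := by simpa [mono] using congrArg (· (2, 0)) h
  have h11 : e * b + d * (a * μ) = μ * (a * d) + μ * (b * (e * μ)) := by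
    simpa [mono] using congrArg (· (1, 1)) h
  have h₁ : 1 - μ ≠ 0 := sub_ne_zero.mpr hμ₁.symm
  have h₂ : 1 - μ ^ 2 ≠ 0 := sub_ne_zero.mpr hμ₂.symm
  refine ⟨(mul_eq_zero.mp (?_ : (1 - μ) * (a * e) = 0)).resolve_left h₁,
    (mul_eq_zero.mp (?_ : (1 - μ) * (b * d) = 0)).resolve_left h₁,
    (mul_eq_zero.mp (?_ : (1 - μ ^ 2) * (b * e) = 0)).resolve_left h₂⟩
  · linear_combination h02
  · linear_combination h20
  · linear_combination h11

theorem exists_algEquiv_apply_eq_smul (hμ₁ : μ ≠ 1) (hμ₂ : μ ^ 2 ≠ 1)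
    (σ : QPW k μ c ≃ₐ[k] QPW k μ c)
    (hσ : ∀ a ∈ Submodule.span k {u k μ c, v k μ c}, σ a ∈ Submodule.span k {u k μ c, v k μ c}) :
    ∃ α β : k, α ≠ 0 ∧ β ≠ 0 ∧ σ (u k μ c) = α • u k μ c ∧ σ (v k μ c) = β • v k μ c := by
  obtain ⟨a, b, hab⟩ :=
    Submodule.mem_span_pair.mp (hσ (u k μ c) (Submodule.subset_span (by simp)))
  obtain ⟨e, d, hed⟩ :=
    Submodule.mem_span_pair.mp (hσ (v k μ c) (Submodule.subset_span (by simp)))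
  have hrel := congrArg σ (u_mul_v μ c)
  rw [map_mul, map_add, map_smul, map_mul, AlgEquiv.commutes, ← hab, ← hed] at hrel
  obtain ⟨hae, hbd, hbe⟩ := coeffs_mul_eq_zero_of_rel μ c hμ₁ hμ₂ hrel
  have hu0 : σ (u k μ c) ≠ 0 :=
    EmbeddingLike.map_ne_zero_iff.mpr ((linearIndependent_u_v μ c).ne_zero 0)
  have hv0 : σ (v k μ c) ≠ 0 :=
    EmbeddingLike.map_ne_zero_iff.mpr ((linearIndependent_u_v μ c).ne_zero 1)
  have hb : b = 0 := by
    by_contra hb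
    apply hv0
    rw [← hed, (mul_eq_zero.mp hbd).resolve_left hb, (mul_eq_zero.mp hbe).resolve_left hb]
    simp
  have ha : a ≠ 0 := by
    rintro rfl
    exact hu0 (by rw [← hab, hb]; simp)
  have he : e = 0 := (mul_eq_zero.mp hae).resolve_left ha
  have hd : d ≠ 0 := by
    rintro rfl
    exact hv0 (by rw [← hed, he]; simp)
  exact ⟨a, d, ha, hd, by rw [← hab, hb, zero_smul, add_zero],
    by rw [← hed, he, zero_smul, zero_add]⟩

end QPW

section Characters

variable {k : Type} [Field k] {G : Type} [CommGroup G] {θ : ℕ} {gs : Fin θ → G}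
  {χs : Fin θ → (G →* k)}

theorem exists_isPrimitiveRoot_of_chi_eq (hcomp : ∀ i j, i ≠ j → χs i (gs j) * χs j (gs i) = 1)
    {i j : Fin θ} (hij : i ≠ j) (heq : χs i = χs j) :
    ∃ (m : ℕ) (ω : k), IsPrimitiveRoot ω m ∧
      χs i (gs i) = ω ∧ χs j (gs i) = ω ∧ χs i (gs j) = ω⁻¹ ∧ χs j (gs j) = ω⁻¹ := by
  have hinv : χs i (gs j) = (χs i (gs i))⁻¹ :=
    eq_inv_of_mul_eq_one_left (heq ▸ hcomp i j hij)
  exact ⟨_, _, IsPrimitiveRoot.orderOf _, rfl, heq ▸ rfl, hinv, heq ▸ hinv⟩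

theorem le_two_of_forall_chi_eq (hcomp : ∀ i j, i ≠ j → χs i (gs j) * χs j (gs i) = 1)
    (hm3 : ∀ i, 3 ≤ orderOf (χs i (gs i))) (heq : ∀ i j, χs i = χs j) : θ ≤ 2 := by
  by_contra! hθ
  let i₀ : Fin θ := ⟨0, by omega⟩
  let i₁ : Fin θ := ⟨1, by omega⟩
  let i₂ : Fin θ := ⟨2, by omega⟩
  set χ := χs i₀
  have hχ (i j : Fin θ) (hij : i ≠ j) : χ (gs j) * χ (gs i) = 1 := by
    have := hcomp i j hij
    rwa [heq i i₀, heq j i₀] at this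
  have h₁₂ : χ (gs i₁) = χ (gs i₂) :=
    mul_right_cancel₀ (left_ne_zero_of_mul_eq_one (hχ i₁ i₀ (by simp [i₀, i₁, Fin.ext_iff])))
      ((hχ i₀ i₁ (by simp [i₀, i₁, Fin.ext_iff])).trans
        (hχ i₀ i₂ (by simp [i₀, i₂, Fin.ext_iff])).symm)
  have hsq : χ (gs i₁) ^ 2 = 1 := by
    rw [sq]
    nth_rw 1 [h₁₂]
    exact hχ i₁ i₂ (by simp [i₁, i₂, Fin.ext_iff])
  have h3 : 3 ≤ orderOf (χ (gs i₁)) := by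
    have := hm3 i₁
    rwa [heq i₁ i₀] at this
  exact absurd (orderOf_le_of_pow_eq_one two_pos hsq) (by omega)

end Characters

theorem stmt_7_general {k : Type} [Field k] {G : Type} [CommGroup G] {θ : ℕ}
    (gs : Fin θ → G) (χs : Fin θ → (G →* k))
    (hcomp : ∀ i j, i ≠ j → χs i (gs j) * χs j (gs i) = 1)
    (hm3 : ∀ i, 3 ≤ orderOf (χs i (gs i)))
    {μ c : k} {κ : ℕ} (hμ : IsPrimitiveRoot μ κ) (hκ : 3 ≤ κ)
    (T : BosAction k G gs χs (QPW k μ c))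
    (hlinG : ∀ (h : G), ∀ a ∈ Submodule.span k {QPW.u k μ c, QPW.v k μ c},
      T.ρ h a ∈ Submodule.span k {QPW.u k μ c, QPW.v k μ c})
    (hlinx : ∀ (i : Fin θ), ∀ a ∈ Submodule.span k {QPW.u k μ c, QPW.v k μ c},
      T.x i a ∈ Submodule.span k {QPW.u k μ c, QPW.v k μ c})
    (hif : T.InnerFaithful) :
    θ ≤ 2 ∧
    (∀ i j : Fin θ, i ≠ j → ∃ (m : ℕ) (ω : k), IsPrimitiveRoot ω m ∧
      χs i (gs i) = ω ∧ χs j (gs i) = ω ∧ χs i (gs j) = ω⁻¹ ∧ χs j (gs j) = ω⁻¹) := by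
  have hμ₁ : μ ≠ 1 := by simpa using hμ.pow_ne_one_of_pos_of_lt one_ne_zero (by omega)
  have hμ₂ : μ ^ 2 ≠ 1 := hμ.pow_ne_one_of_pos_of_lt two_ne_zero (by omega)
  have hχ (i : Fin θ) : χs i (gs i) ≠ 1 := fun h ↦ by simpa [h] using hm3 i
  have heq : ∀ i j, χs i = χs j :=
    T.chi_eq_of_adjoin_eq_top (QPW.linearIndependent_u_v μ c) (QPW.adjoin_u_v μ c)
      (fun h ↦ QPW.exists_algEquiv_apply_eq_smul μ c hμ₁ hμ₂ (T.ρ h) (hlinG h)) hlinx hχ hif.1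
  exact ⟨le_two_of_forall_chi_eq hcomp hm3 heq,
    fun i j hij ↦ exists_isPrimitiveRoot_of_chi_eq hcomp hij (heq i j)⟩

/-- Suppose the bosonization `B(G, ĝ, χ̂)` of a quantum linear space has rank
`θ` and acts linearly and inner faithfully on `A = k_μ[u,v]` (`c = 0`) or `A = A_1^μ(k)`
(`c = 1`), where `ord(μ)` and all `m_i` are at least `3`.  Then `θ ≤ 2`; and if `θ = 2`
(i.e. for any two distinct indices `i ≠ j`), there exists a primitive `m`-th root of
unity `ω` such that `χ_i(g_i) = χ_j(g_i) = ω` and `χ_i(g_j) = χ_j(g_j) = ω⁻¹`. -/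
theorem stmt_7 {k : Type} [Field k] {G : Type} [CommGroup G] [Fintype G] {θ : ℕ}
    (gs : Fin θ → G) (χs : Fin θ → (G →* k))
    (hcomp : ∀ i j, i ≠ j → χs i (gs j) * χs j (gs i) = 1)
    (hm3 : ∀ i, 3 ≤ orderOf (χs i (gs i)))
    {μ c : k} {κ : ℕ} (hμ : IsPrimitiveRoot μ κ) (hκ : 3 ≤ κ) (hc : c = 0 ∨ c = 1)
    (T : BosAction k G gs χs (QPW k μ c))
    (hlinG : ∀ (h : G), ∀ a ∈ Submodule.span k {QPW.u k μ c, QPW.v k μ c},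
      T.ρ h a ∈ Submodule.span k {QPW.u k μ c, QPW.v k μ c})
    (hlinx : ∀ (i : Fin θ), ∀ a ∈ Submodule.span k {QPW.u k μ c, QPW.v k μ c},
      T.x i a ∈ Submodule.span k {QPW.u k μ c, QPW.v k μ c})
    (hif : T.InnerFaithful) :
    θ ≤ 2 ∧
    (∀ i j : Fin θ, i ≠ j → ∃ (m : ℕ) (ω : k), IsPrimitiveRoot ω m ∧
      χs i (gs i) = ω ∧ χs j (gs i) = ω ∧ χs i (gs j) = ω⁻¹ ∧ χs j (gs j) = ω⁻¹) :=
  stmt_7_general gs χs hcomp hm3 hμ hκ T hlinG hlinx hif
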